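/- Let h ∈ L²(P) be measurable with respect to σ(σ) ∨ 𝒱, with hWσ integrable; set D := E[hWσ | ℋ] and Ã := −E[D·T⁻¹ | 𝒱₋]·(T•·T)⁻¹ + D·T⁻¹. Assume Ã·W·σ ∈ L²(P) and all displayed quantities are integrable. Then Ã·W·σ ∈ Λ̃₅ and h − Ã·W·σ is orthogonal in L²(P) to every element of Λ̃₅; that is, Ã·W·σ is the orthogonal projection of h onto Λ̃₅. -/

import Mathlib

open MeasureTheory

variable {Ω : Type*}

/-- `W := (E[σ² | 𝒱])⁻¹`. -/
noncomputable def Wfun {m0 : MeasurableSpace Ω} (μ : Measure Ω) (mV : MeasurableSpace Ω)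
    (σ : Ω → ℝ) : Ω → ℝ :=
  fun ω => ((μ[(fun ω' => (σ ω')^2)|mV]) ω)⁻¹

/-- `T := E[W | ℋ]`. -/
noncomputable def Tfun {m0 : MeasurableSpace Ω} (μ : Measure Ω)
    (mV mH : MeasurableSpace Ω) (σ : Ω → ℝ) : Ω → ℝ :=
  μ[Wfun μ mV σ|mH]

/-- `T• := E[T⁻¹ | 𝒱₋]`. -/
noncomputable def Tbul {m0 : MeasurableSpace Ω} (μ : Measure Ω)
    (mV mH mVm : MeasurableSpace Ω) (σ : Ω → ℝ) : Ω → ℝ :=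
  μ[(fun ω => (Tfun μ mV mH σ ω)⁻¹)|mVm]

/-- `D := E[h·W·σ | ℋ]`. -/
noncomputable def Dfun {m0 : MeasurableSpace Ω} (μ : Measure Ω)
    (mV mH : MeasurableSpace Ω) (σ h : Ω → ℝ) : Ω → ℝ :=
  μ[(fun ω => h ω * Wfun μ mV σ ω * σ ω)|mH]

/-- `Ã := −E[D·T⁻¹ | 𝒱₋]·(T•·T)⁻¹ + D·T⁻¹`. -/
noncomputable def Atilde {m0 : MeasurableSpace Ω} (μ : Measure Ω)
    (mV mH mVm : MeasurableSpace Ω) (σ h : Ω → ℝ) : Ω → ℝ :=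
  fun ω => -(μ[(fun ω' => Dfun μ mV mH σ h ω' * (Tfun μ mV mH σ ω')⁻¹)|mVm]) ω *
      (Tbul μ mV mH mVm σ ω * Tfun μ mV mH σ ω)⁻¹
    + Dfun μ mV mH σ h ω * (Tfun μ mV mH σ ω)⁻¹

/-- The subspace `Λ̃₅ = {A•·W·σ ∈ L² : A• ℋ-measurable with E[A• | 𝒱₋] = 0 a.s.}`. -/
def LambdaTilde5 {m0 : MeasurableSpace Ω} (μ : Measure Ω)
    (mV mH mVm : MeasurableSpace Ω) (σ : Ω → ℝ) : Set (Ω → ℝ) :=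
  {f | ∃ A : Ω → ℝ, StronglyMeasurable[mH] A ∧ μ[A|mVm] =ᵐ[μ] 0 ∧
    f = (fun ω => A ω * Wfun μ mV σ ω * σ ω) ∧ MemLp f 2 μ}

/-!
Conditioning on `𝒱` and then on `ℋ` turns `B·(W·σ)²` into `B·T` for every `ℋ`-measurable `B`,
because `W·E[σ² | 𝒱] = 1`. With `D̄ := E[D·T⁻¹ | 𝒱₋] / T•` one has `Ã = (D − D̄)·T⁻¹`, so the
inner product of `h − Ã·W·σ` with `A·W·σ` is `E[A·D − Ã·A·T] = E[D̄·A]`, which vanishes because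
`D̄` is `𝒱₋`-measurable and `E[A | 𝒱₋] = 0`. The same decomposition gives
`E[Ã | 𝒱₋] = E[D·T⁻¹ | 𝒱₋] − D̄·T• = 0`. Finally `A` is integrable, as `|A| ≤ A²·T + T⁻¹`
and `E[A²·T] = E[(A·W·σ)²]`.
-/

theorem abs_le_sq_mul_add_inv {a t : ℝ} (ht : 0 < t) : |a| ≤ a ^ 2 * t + t⁻¹ := by
  have hsq : 0 ≤ (|a| * t - 1) ^ 2 * t⁻¹ := by positivity
  have key : a ^ 2 * t + t⁻¹ - 2 * |a| = (|a| * t - 1) ^ 2 * t⁻¹ := by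
    field_simp
    rw [← sq_abs a]
    ring
  nlinarith [abs_nonneg a]

theorem integrable_of_integrable_sq_mul_of_integrable_inv {m0 : MeasurableSpace Ω} {μ : Measure Ω}
    {A T : Ω → ℝ} (hA : AEStronglyMeasurable A μ) (hT : ∀ᵐ ω ∂μ, 0 < T ω)
    (hAT : Integrable (fun ω => A ω ^ 2 * T ω) μ) (hTinv : Integrable (fun ω => (T ω)⁻¹) μ) :
    Integrable A μ :=
  (hAT.add hTinv).mono' hA (hT.mono fun _ hω => abs_le_sq_mul_add_inv hω)

theorem integral_mul_eq_zero_of_condExp_ae_eq_zero {m m0 : MeasurableSpace Ω} {μ : Measure Ω}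
    [IsFiniteMeasure μ] (hm : m ≤ m0) {f g : Ω → ℝ} (hf : StronglyMeasurable[m] f)
    (hfg : Integrable (f * g) μ) (hg : Integrable g μ) (hg0 : μ[g|m] =ᵐ[μ] 0) :
    ∫ ω, f ω * g ω ∂μ = 0 := by
  calc ∫ ω, f ω * g ω ∂μ = ∫ ω, (μ[f * g|m]) ω ∂μ := (integral_condExp hm).symm
    _ = ∫ ω, (0 : ℝ) ∂μ := by
      refine integral_congr_ae ((condExp_mul_of_stronglyMeasurable_left hf hfg hg).trans ?_)
      filter_upwards [hg0] with ω hω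
      simp [hω]
    _ = 0 := integral_zero _ _

/-- The `T⁻¹`-weighted conditional mean `D̄` of `D` given `𝒱₋`. -/
noncomputable def Dbar {m0 : MeasurableSpace Ω} (μ : Measure Ω)
    (mV mH mVm : MeasurableSpace Ω) (σ h : Ω → ℝ) : Ω → ℝ :=
  fun ω => (μ[(fun ω' => Dfun μ mV mH σ h ω' * (Tfun μ mV mH σ ω')⁻¹)|mVm]) ω /
    Tbul μ mV mH mVm σ ω

section Projection

variable {m0 : MeasurableSpace Ω} {μ : Measure Ω} {mVm mH mV : MeasurableSpace Ω}
  {σ h A B : Ω → ℝ}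

theorem stronglyMeasurable_Wfun : StronglyMeasurable[mV] (Wfun μ mV σ) :=
  stronglyMeasurable_condExp.measurable.inv.stronglyMeasurable

theorem stronglyMeasurable_Dbar : StronglyMeasurable[mVm] (Dbar μ mV mH mVm σ h) :=
  (stronglyMeasurable_condExp.measurable.div
    stronglyMeasurable_condExp.measurable).stronglyMeasurable

theorem Atilde_eq : Atilde μ mV mH mVm σ h =
    (Dfun μ mV mH σ h - Dbar μ mV mH mVm σ h) * fun ω => (Tfun μ mV mH σ ω)⁻¹ := by
  funext ω
  simp only [Atilde, Dbar, Pi.mul_apply, Pi.sub_apply, mul_inv]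
  ring

theorem stronglyMeasurable_Atilde (hVmH : mVm ≤ mH) :
    StronglyMeasurable[mH] (Atilde μ mV mH mVm σ h) := by
  rw [Atilde_eq]
  exact ((stronglyMeasurable_condExp.measurable.sub
    (stronglyMeasurable_Dbar.mono hVmH).measurable).mul
    stronglyMeasurable_condExp.measurable.inv).stronglyMeasurable

theorem condExp_Atilde_ae_eq_zero (hTbul : ∀ᵐ ω ∂μ, Tbul μ mV mH mVm σ ω ≠ 0)
    (hTinv : Integrable (fun ω => (Tfun μ mV mH σ ω)⁻¹) μ)
    (hDTinv : Integrable (fun ω => Dfun μ mV mH σ h ω * (Tfun μ mV mH σ ω)⁻¹) μ)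
    (hAtilde : Integrable (Atilde μ mV mH mVm σ h) μ) :
    μ[Atilde μ mV mH mVm σ h|mVm] =ᵐ[μ] 0 := by
  have hsplit : Atilde μ mV mH mVm σ h = (fun ω => Dfun μ mV mH σ h ω * (Tfun μ mV mH σ ω)⁻¹)
      - Dbar μ mV mH mVm σ h * fun ω => (Tfun μ mV mH σ ω)⁻¹ := by
    rw [Atilde_eq, sub_mul]
    rfl
  have hDbarT : Integrable (Dbar μ mV mH mVm σ h * fun ω => (Tfun μ mV mH σ ω)⁻¹) μ := by
    rw [← sub_sub_cancel _ (Dbar μ mV mH mVm σ h * _), ← hsplit]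
    exact hDTinv.sub hAtilde
  rw [hsplit]
  filter_upwards [condExp_sub hDTinv hDbarT mVm,
    condExp_mul_of_stronglyMeasurable_left stronglyMeasurable_Dbar hDbarT hTinv, hTbul]
    with ω hsub hpull hω
  rw [hsub, Pi.sub_apply, hpull, Pi.mul_apply, Pi.zero_apply, sub_eq_zero]
  exact (div_mul_cancel₀ _ hω).symm

theorem condExp_mul_sq_Wfun_mul_ae_eq_mul_Wfun (hσ2 : MemLp σ 2 μ)
    (hσvar : ∀ᵐ ω ∂μ, (μ[(fun ω' => (σ ω') ^ 2)|mV]) ω ≠ 0) (hB : StronglyMeasurable[mV] B)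
    (hBint : Integrable (fun ω => B ω * (Wfun μ mV σ ω * σ ω) ^ 2) μ) :
    μ[(fun ω => B ω * (Wfun μ mV σ ω * σ ω) ^ 2)|mV] =ᵐ[μ] B * Wfun μ mV σ := by
  have hsplit : (fun ω => B ω * (Wfun μ mV σ ω * σ ω) ^ 2) =
      (B * Wfun μ mV σ ^ 2) * fun ω => σ ω ^ 2 := by
    funext ω
    simp only [Pi.mul_apply, Pi.pow_apply]
    ring
  rw [hsplit] at hBint ⊢
  filter_upwards [condExp_mul_of_stronglyMeasurable_left
    (hB.mul (stronglyMeasurable_Wfun.pow 2)) hBint hσ2.integrable_sq, hσvar] with ω hpull hω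
  rw [hpull]
  simp only [Pi.mul_apply, Pi.pow_apply, Wfun]
  field_simp

theorem condExp_mul_sq_Wfun_mul_ae_eq_mul_Tfun [IsFiniteMeasure μ] (hHV : mH ≤ mV)
    (hV : mV ≤ m0) (hσ2 : MemLp σ 2 μ)
    (hσvar : ∀ᵐ ω ∂μ, (μ[(fun ω' => (σ ω') ^ 2)|mV]) ω ≠ 0)
    (hW : Integrable (Wfun μ mV σ) μ) (hB : StronglyMeasurable[mH] B)
    (hBint : Integrable (fun ω => B ω * (Wfun μ mV σ ω * σ ω) ^ 2) μ) :
    μ[(fun ω => B ω * (Wfun μ mV σ ω * σ ω) ^ 2)|mH] =ᵐ[μ] B * Tfun μ mV mH σ := by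
  have hBW := condExp_mul_sq_Wfun_mul_ae_eq_mul_Wfun hσ2 hσvar (hB.mono hHV) hBint
  exact (condExp_condExp_of_le hHV hV).symm.trans ((condExp_congr_ae hBW).trans
    (condExp_mul_of_stronglyMeasurable_left hB (integrable_condExp.congr hBW) hW))

theorem integrable_of_memLp_mul_Wfun_mul [IsFiniteMeasure μ] (hHV : mH ≤ mV) (hV : mV ≤ m0)
    (hσ2 : MemLp σ 2 μ) (hσvar : ∀ᵐ ω ∂μ, (μ[(fun ω' => (σ ω') ^ 2)|mV]) ω ≠ 0)
    (hW : Integrable (Wfun μ mV σ) μ) (hT : ∀ᵐ ω ∂μ, 0 < Tfun μ mV mH σ ω)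
    (hTinv : Integrable (fun ω => (Tfun μ mV mH σ ω)⁻¹) μ) (hA : StronglyMeasurable[mH] A)
    (hAL2 : MemLp (fun ω => A ω * Wfun μ mV σ ω * σ ω) 2 μ) : Integrable A μ := by
  have hA2 : Integrable (fun ω => A ω ^ 2 * (Wfun μ mV σ ω * σ ω) ^ 2) μ :=
    hAL2.integrable_sq.congr (.of_forall fun ω => by ring)
  have hA2T := condExp_mul_sq_Wfun_mul_ae_eq_mul_Tfun hHV hV hσ2 hσvar hW
    (hA.pow 2) hA2
  exact integrable_of_integrable_sq_mul_of_integrable_inv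
    (hA.mono (hHV.trans hV)).aestronglyMeasurable hT (integrable_condExp.congr hA2T) hTinv

theorem integral_sub_Atilde_mul_Wfun_mul_mul_eq_zero [IsFiniteMeasure μ] (hVmH : mVm ≤ mH)
    (hHV : mH ≤ mV) (hV : mV ≤ m0) (hσ2 : MemLp σ 2 μ)
    (hσvar : ∀ᵐ ω ∂μ, (μ[(fun ω' => (σ ω') ^ 2)|mV]) ω ≠ 0)
    (hW : Integrable (Wfun μ mV σ) μ) (hT : ∀ᵐ ω ∂μ, 0 < Tfun μ mV mH σ ω)
    (hTinv : Integrable (fun ω => (Tfun μ mV mH σ ω)⁻¹) μ) (hh2 : MemLp h 2 μ)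
    (hhWσ : Integrable (fun ω => h ω * Wfun μ mV σ ω * σ ω) μ)
    (hAtildeL2 : MemLp (fun ω => Atilde μ mV mH mVm σ h ω * Wfun μ mV σ ω * σ ω) 2 μ)
    (hA : StronglyMeasurable[mH] A) (hA0 : μ[A|mVm] =ᵐ[μ] 0)
    (hAL2 : MemLp (fun ω => A ω * Wfun μ mV σ ω * σ ω) 2 μ) :
    ∫ ω, (h ω - Atilde μ mV mH mVm σ h ω * Wfun μ mV σ ω * σ ω) *
      (A ω * Wfun μ mV σ ω * σ ω) ∂μ = 0 := by
  have hmH : mH ≤ m0 := hHV.trans hV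
  have hhA : Integrable (A * fun ω => h ω * Wfun μ mV σ ω * σ ω) μ :=
    (hh2.integrable_mul hAL2).congr (.of_forall fun ω => by simp only [Pi.mul_apply]; ring)
  have hAtildeA : Integrable (fun ω => (Atilde μ mV mH mVm σ h * A) ω *
      (Wfun μ mV σ ω * σ ω) ^ 2) μ :=
    (hAtildeL2.integrable_mul hAL2).congr (.of_forall fun ω => by simp only [Pi.mul_apply]; ring)
  have hsplit : (fun ω => (h ω - Atilde μ mV mH mVm σ h ω * Wfun μ mV σ ω * σ ω) *
      (A ω * Wfun μ mV σ ω * σ ω)) = (A * fun ω => h ω * Wfun μ mV σ ω * σ ω) -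
      fun ω => (Atilde μ mV mH mVm σ h * A) ω * (Wfun μ mV σ ω * σ ω) ^ 2 := by
    funext ω
    simp only [Pi.mul_apply, Pi.sub_apply]
    ring
  have hcond : μ[(fun ω => (h ω - Atilde μ mV mH mVm σ h ω * Wfun μ mV σ ω * σ ω) *
      (A ω * Wfun μ mV σ ω * σ ω))|mH] =ᵐ[μ] Dbar μ mV mH mVm σ h * A := by
    rw [hsplit]
    filter_upwards [condExp_sub hhA hAtildeA mH,
      condExp_mul_of_stronglyMeasurable_left hA hhA hhWσ,
      condExp_mul_sq_Wfun_mul_ae_eq_mul_Tfun hHV hV hσ2 hσvar hW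
        ((stronglyMeasurable_Atilde hVmH).mul hA) hAtildeA, hT] with ω hsub hD hAT hTω
    rw [hsub, Pi.sub_apply, hD, hAT, Atilde_eq]
    simp only [Pi.mul_apply, Pi.sub_apply, Dfun]
    field_simp
    ring
  calc _ = ∫ ω, (Dbar μ mV mH mVm σ h * A) ω ∂μ :=
        (integral_condExp hmH).symm.trans (integral_congr_ae hcond)
    _ = 0 := integral_mul_eq_zero_of_condExp_ae_eq_zero (hVmH.trans hmH) stronglyMeasurable_Dbar
        (integrable_condExp.congr hcond)
        (integrable_of_memLp_mul_Wfun_mul hHV hV hσ2 hσvar hW hT hTinv hA hAL2) hA0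

end Projection

theorem projection_onto_LambdaTilde5_general
    {m0 : MeasurableSpace Ω} (μ : Measure Ω) [IsProbabilityMeasure μ]
    (mVm mH mV : MeasurableSpace Ω)
    (hVmH : mVm ≤ mH) (hHV : mH ≤ mV) (hV : mV ≤ m0)
    (σ : Ω → ℝ) (hσ2 : MemLp σ 2 μ)
    (hσvar : ∀ᵐ ω ∂μ, 0 < (μ[(fun ω' => (σ ω')^2)|mV]) ω)
    (hWint : Integrable (Wfun μ mV σ) μ)
    (hTpos : ∀ᵐ ω ∂μ, 0 < Tfun μ mV mH σ ω)
    (hTinvInt : Integrable (fun ω => (Tfun μ mV mH σ ω)⁻¹) μ)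
    (hTbpos : ∀ᵐ ω ∂μ, 0 < Tbul μ mV mH mVm σ ω)
    (h : Ω → ℝ) (hh2 : MemLp h 2 μ)
    (hhWσInt : Integrable (fun ω => h ω * Wfun μ mV σ ω * σ ω) μ)
    (hDTinvInt : Integrable (fun ω => Dfun μ mV mH σ h ω * (Tfun μ mV mH σ ω)⁻¹) μ)
    (hAInt : Integrable (Atilde μ mV mH mVm σ h) μ)
    (hAL2 : MemLp (fun ω => Atilde μ mV mH mVm σ h ω * Wfun μ mV σ ω * σ ω) 2 μ) :
    (fun ω => Atilde μ mV mH mVm σ h ω * Wfun μ mV σ ω * σ ω) ∈ LambdaTilde5 μ mV mH mVm σ ∧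
      ∀ f ∈ LambdaTilde5 μ mV mH mVm σ,
        ∫ ω, (h ω - Atilde μ mV mH mVm σ h ω * Wfun μ mV σ ω * σ ω) * f ω ∂μ = 0 := by
  refine ⟨⟨Atilde μ mV mH mVm σ h, stronglyMeasurable_Atilde hVmH,
    condExp_Atilde_ae_eq_zero (hTbpos.mono fun _ hω => hω.ne') hTinvInt hDTinvInt hAInt,
    rfl, hAL2⟩, ?_⟩
  rintro f ⟨A, hA, hA0, rfl, hAWσ⟩
  exact integral_sub_Atilde_mul_Wfun_mul_mul_eq_zero hVmH hHV hV hσ2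
    (hσvar.mono fun _ hω => hω.ne') hWint hTpos hTinvInt hh2 hhWσInt hAL2 hA hA0 hAWσ

/-- projection onto `Λ̃₅`.
With nested sub-σ-algebras `𝒱₋ ⊆ ℋ ⊆ 𝒱 ⊆ ℱ` and `σ, W, T, T•` as in the context, let
`h ∈ L²(P)` be measurable with respect to `σ(σ) ∨ 𝒱` with `h·W·σ` integrable; set
`D := E[hWσ | ℋ]` and `Ã := −E[D·T⁻¹ | 𝒱₋]·(T•·T)⁻¹ + D·T⁻¹`, assume `Ã·W·σ ∈ L²(P)`
and the displayed quantities are integrable.  Then `Ã·W·σ ∈ Λ̃₅` and `h − Ã·W·σ` is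
orthogonal in `L²(P)` to every element of `Λ̃₅`; i.e. `Ã·W·σ` is the orthogonal
projection of `h` onto `Λ̃₅`. -/
theorem projection_onto_LambdaTilde5
    {m0 : MeasurableSpace Ω} (μ : Measure Ω) [IsProbabilityMeasure μ]
    (mVm mH mV : MeasurableSpace Ω)
    (hVmH : mVm ≤ mH) (hHV : mH ≤ mV) (hV : mV ≤ m0)
    (σ : Ω → ℝ) (hσ2 : MemLp σ 2 μ)
    (hσcond : μ[σ|mV] =ᵐ[μ] 0)
    (hσvar : ∀ᵐ ω ∂μ, 0 < (μ[(fun ω' => (σ ω')^2)|mV]) ω)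
    (hWint : Integrable (Wfun μ mV σ) μ)
    (hTpos : ∀ᵐ ω ∂μ, 0 < Tfun μ mV mH σ ω)
    (hTinvInt : Integrable (fun ω => (Tfun μ mV mH σ ω)⁻¹) μ)
    (hTbpos : ∀ᵐ ω ∂μ, 0 < Tbul μ mV mH mVm σ ω)
    (h : Ω → ℝ) (hh2 : MemLp h 2 μ)
    (hhmeas : StronglyMeasurable[MeasurableSpace.comap σ (inferInstance : MeasurableSpace ℝ) ⊔ mV] h)
    (hhWσInt : Integrable (fun ω => h ω * Wfun μ mV σ ω * σ ω) μ)
    (hDTinvInt : Integrable (fun ω => Dfun μ mV mH σ h ω * (Tfun μ mV mH σ ω)⁻¹) μ)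
    (hAInt : Integrable (Atilde μ mV mH mVm σ h) μ)
    (hAL2 : MemLp (fun ω => Atilde μ mV mH mVm σ h ω * Wfun μ mV σ ω * σ ω) 2 μ) :
    (fun ω => Atilde μ mV mH mVm σ h ω * Wfun μ mV σ ω * σ ω) ∈ LambdaTilde5 μ mV mH mVm σ ∧
      ∀ f ∈ LambdaTilde5 μ mV mH mVm σ,
        ∫ ω, (h ω - Atilde μ mV mH mVm σ h ω * Wfun μ mV σ ω * σ ω) * f ω ∂μ = 0 :=
  projection_onto_LambdaTilde5_general μ mVm mH mV hVmH hHV hV σ hσ2 hσvar hWint hTpos hTinvInt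
    hTbpos h hh2 hhWσInt hDTinvInt hAInt hAL2
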